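/- arXiv:2308.16720 — 3 statements merged into one kernel-verified Lean document; each statement's English description precedes it below -/
import Mathlib

section
/- Let H be a real Hilbert space, r ∈ ℕ, and let u, v : Fin r → H be orthonormal families such that the r×r Gram matrix S with entries S i j = ⟨u i, v j⟩ is symmetric and positive semidefinite. Then for every w ∈ EuclideanSpace ℝ (Fin r), ‖∑ i, (w i) • (u i − v i)‖ ≤ √2 · ‖P_U − P_V‖ · ‖w‖, where ‖P_U − P_V‖ is the operator norm of the difference of the two orthogonal projections; equivalently, the operator norm of the linear map w ↦ ∑ i, (w i) • (u i − v i) from EuclideanSpace ℝ (Fin r) to H is at most √2 · ‖P_U − P_V‖. -/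
/-!
Write `x = ∑ wᵢ uᵢ`, `y = ∑ wᵢ vᵢ` and `S` for the cross-Gram matrix. Then
`‖x - y‖² = 2 (‖w‖² - wᵀ S w)`, while `P_U y = ∑ (S w)ⱼ uⱼ`, so by Pythagoras
`‖(P_U - P_V) y‖² = ‖y - P_U y‖² = ‖w‖² - ‖S w‖²`. By Cauchy–Schwarz `S ≤ 1`, and with `S ≥ 0`
this gives `S - S² = √S (1 - S) √S ≥ 0`, i.e. `‖S w‖² ≤ wᵀ S w`. Therefore
`‖x - y‖² ≤ 2 ‖(P_U - P_V) y‖² ≤ 2 ‖P_U - P_V‖² ‖w‖²`.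
-/

open scoped InnerProductSpace

/-- The orthogonal projection of a real Hilbert space onto the (finite-dimensional, hence
complete) span of a finite family, viewed as a continuous linear map `H →L[ℝ] H`. -/
noncomputable def spanProj {H : Type*} [NormedAddCommGroup H] [InnerProductSpace ℝ H]
    [CompleteSpace H] {r : ℕ} (u : Fin r → H) : H →L[ℝ] H :=
  haveI : FiniteDimensional ℝ (Submodule.span ℝ (Set.range u)) :=
    FiniteDimensional.span_of_finite ℝ (Set.finite_range u)
  (Submodule.span ℝ (Set.range u)).subtypeL.comp
    (Submodule.orthogonalProjection (Submodule.span ℝ (Set.range u)))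

section

open scoped Matrix MatrixOrder

theorem mul_self_le_self_of_nonneg_of_le_one {A : Type*} [PartialOrder A] [Ring A] [StarRing A]
    [TopologicalSpace A] [StarOrderedRing A] [Algebra ℝ A]
    [ContinuousFunctionalCalculus ℝ A IsSelfAdjoint] [NonnegSpectrumClass ℝ A]
    [IsSemitopologicalRing A] [T2Space A] {a : A} (h0 : 0 ≤ a) (h1 : a ≤ 1) : a * a ≤ a := by
  have hs := CFC.sqrt_mul_sqrt_self a h0
  calc a * a = CFC.sqrt a * (CFC.sqrt a * CFC.sqrt a) * CFC.sqrt a := by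
        rw [← mul_assoc, hs, mul_assoc, hs]
    _ ≤ CFC.sqrt a * 1 * CFC.sqrt a := by
        rw [hs]; exact conjugate_le_conjugate_of_nonneg h1 (CFC.sqrt_nonneg a)
    _ = a := by rw [mul_one, hs]

theorem Matrix.mulVec_dotProduct_mulVec_le {ι : Type*} [Fintype ι] [DecidableEq ι]
    {S : Matrix ι ι ℝ} (h0 : 0 ≤ S) (h1 : S ≤ 1) (x : ι → ℝ) :
    (S *ᵥ x) ⬝ᵥ (S *ᵥ x) ≤ x ⬝ᵥ (S *ᵥ x) := by
  have h := (le_iff.mp (mul_self_le_self_of_nonneg_of_le_one h0 h1)).dotProduct_mulVec_nonneg x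
  have hS : Sᵀ = S := (nonneg_iff_posSemidef.mp h0).isHermitian
  rwa [star_trivial, sub_mulVec, dotProduct_sub, sub_nonneg, ← mulVec_mulVec,
    dotProduct_mulVec x S, ← mulVec_transpose, hS] at h

variable {H : Type*} [NormedAddCommGroup H] [InnerProductSpace ℝ H]

section CrossGram

variable {ι : Type*} [Fintype ι]

abbrev crossGram (u v : ι → H) : Matrix ι ι ℝ := Matrix.of fun i j => ⟪u i, v j⟫_ℝ

theorem inner_sum_smul_right_eq_crossGram_mulVec (u v : ι → H) (x : ι → ℝ) (j : ι) :
    ⟪u j, ∑ i, x i • v i⟫_ℝ = (crossGram u v *ᵥ x) j := by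
  simp [inner_sum, real_inner_smul_right, Matrix.mulVec, dotProduct, mul_comm]

theorem inner_sum_smul_sum_smul_eq_dotProduct (u v : ι → H) (x y : ι → ℝ) :
    ⟪∑ i, x i • u i, ∑ j, y j • v j⟫_ℝ = x ⬝ᵥ (crossGram u v *ᵥ y) := by
  simp only [sum_inner, real_inner_smul_left, inner_sum_smul_right_eq_crossGram_mulVec,
    dotProduct]

theorem sum_smul_mem_span_range (u : ι → H) (x : ι → ℝ) :
    ∑ i, x i • u i ∈ Submodule.span ℝ (Set.range u) :=
  Submodule.sum_smul_mem _ x fun i _ => Submodule.subset_span (Set.mem_range_self i)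

variable {u v : ι → H}

theorem Orthonormal.norm_sum_smul_sq (hu : Orthonormal ℝ u) (x : ι → ℝ) :
    ‖∑ i, x i • u i‖ ^ 2 = x ⬝ᵥ x := by
  rw [← real_inner_self_eq_norm_sq, hu.inner_sum]
  simp [dotProduct]

theorem Orthonormal.norm_sum_smul_euclidean (hu : Orthonormal ℝ u) (w : EuclideanSpace ℝ ι) :
    ‖∑ i, w i • u i‖ = ‖w‖ := by
  rw [← sq_eq_sq₀ (norm_nonneg _) (norm_nonneg _), hu.norm_sum_smul_sq,
    EuclideanSpace.real_norm_sq_eq]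
  simp [dotProduct, sq]

theorem Orthonormal.norm_sum_smul_sub_sq (hu : Orthonormal ℝ u) (hv : Orthonormal ℝ v)
    (x : ι → ℝ) :
    ‖∑ i, x i • (u i - v i)‖ ^ 2 = 2 * (x ⬝ᵥ x - x ⬝ᵥ (crossGram u v *ᵥ x)) := by
  simp only [smul_sub, Finset.sum_sub_distrib]
  rw [norm_sub_sq_real, hu.norm_sum_smul_sq, hv.norm_sum_smul_sq,
    inner_sum_smul_sum_smul_eq_dotProduct]
  ring

theorem Orthonormal.crossGram_le_one [DecidableEq ι] (hu : Orthonormal ℝ u)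
    (hv : Orthonormal ℝ v) (hG : (crossGram u v).IsHermitian) : crossGram u v ≤ 1 := by
  refine Matrix.le_iff.mpr (.of_dotProduct_mulVec_nonneg (Matrix.isHermitian_one.sub hG) ?_)
  intro x
  rw [star_trivial, Matrix.sub_mulVec, Matrix.one_mulVec, dotProduct_sub, sub_nonneg]
  have hnorm : ‖∑ i, x i • u i‖ = ‖∑ i, x i • v i‖ := by
    rw [← sq_eq_sq₀ (norm_nonneg _) (norm_nonneg _), hu.norm_sum_smul_sq, hv.norm_sum_smul_sq]
  calc x ⬝ᵥ (crossGram u v *ᵥ x) = ⟪∑ i, x i • u i, ∑ i, x i • v i⟫_ℝ :=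
        (inner_sum_smul_sum_smul_eq_dotProduct u v x x).symm
    _ ≤ ‖∑ i, x i • u i‖ * ‖∑ i, x i • v i‖ := real_inner_le_norm _ _
    _ = x ⬝ᵥ x := by rw [← hnorm, ← sq, hu.norm_sum_smul_sq]

end CrossGram

section Projection

variable [CompleteSpace H] {r : ℕ}

instance finiteDimensional_span_range {ι : Type*} [Finite ι] (u : ι → H) :
    FiniteDimensional ℝ (Submodule.span ℝ (Set.range u)) :=
  FiniteDimensional.span_of_finite ℝ (Set.finite_range u)

theorem spanProj_eq_starProjection (u : Fin r → H) :
    spanProj u = (Submodule.span ℝ (Set.range u)).starProjection :=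
  rfl

theorem spanProj_apply_of_mem {u : Fin r → H} {y : H}
    (hy : y ∈ Submodule.span ℝ (Set.range u)) : spanProj u y = y := by
  rw [spanProj_eq_starProjection]
  exact Submodule.starProjection_eq_self_iff.mpr hy

theorem Orthonormal.spanProj_apply {u : Fin r → H} (hu : Orthonormal ℝ u) (y : H) :
    spanProj u y = ∑ j, ⟪u j, y⟫_ℝ • u j := by
  rw [spanProj_eq_starProjection]
  refine Submodule.eq_starProjection_of_mem_of_inner_eq_zero (sum_smul_mem_span_range u _)
    fun z hz => ?_
  have hker : Submodule.span ℝ (Set.range u) ≤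
      LinearMap.ker (innerₛₗ ℝ (y - ∑ j, ⟪u j, y⟫_ℝ • u j)) := by
    refine Submodule.span_le.mpr (Set.range_subset_iff.mpr fun i => ?_)
    rw [SetLike.mem_coe, LinearMap.mem_ker, innerₛₗ_apply_apply, inner_sub_left, hu.inner_left_fintype,
      conj_trivial, real_inner_comm, sub_self]
  exact hker hz

theorem norm_sub_spanProj_apply_sq (u : Fin r → H) (y : H) :
    ‖y - spanProj u y‖ ^ 2 = ‖y‖ ^ 2 - ‖spanProj u y‖ ^ 2 := by
  rw [spanProj_eq_starProjection, eq_sub_iff_add_eq', ← Submodule.starProjection_orthogonal_val,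
    ← Submodule.norm_sq_eq_add_norm_sq_starProjection]

theorem Orthonormal.norm_sum_smul_sub_sq_le {u v : Fin r → H} (hu : Orthonormal ℝ u)
    (hv : Orthonormal ℝ v) (hG : (crossGram u v).PosSemidef) (x : Fin r → ℝ) :
    ‖∑ i, x i • (u i - v i)‖ ^ 2 ≤ 2 * ‖(spanProj u - spanProj v) (∑ i, x i • v i)‖ ^ 2 := by
  have hPy : spanProj u (∑ i, x i • v i) = ∑ j, (crossGram u v *ᵥ x) j • u j := by
    simp only [hu.spanProj_apply, inner_sum_smul_right_eq_crossGram_mulVec]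
  have hSx := Matrix.mulVec_dotProduct_mulVec_le (Matrix.nonneg_iff_posSemidef.mpr hG)
    (hu.crossGram_le_one hv hG.isHermitian) x
  rw [sub_apply, spanProj_apply_of_mem (sum_smul_mem_span_range v x),
    norm_sub_rev, norm_sub_spanProj_apply_sq, hPy, hu.norm_sum_smul_sq, hv.norm_sum_smul_sq,
    hu.norm_sum_smul_sub_sq hv]
  linarith

end Projection

end

theorem stmt0_general {H : Type*} [NormedAddCommGroup H] [InnerProductSpace ℝ H] [CompleteSpace H]
    {r : ℕ} (u v : Fin r → H) (hu : Orthonormal ℝ u) (hv : Orthonormal ℝ v)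
    (hS_psd : (Matrix.of fun i j : Fin r => ⟪u i, v j⟫_ℝ).PosSemidef)
    (w : EuclideanSpace ℝ (Fin r)) :
    ‖∑ i, w i • (u i - v i)‖ ≤ Real.sqrt 2 * ‖spanProj u - spanProj v‖ * ‖w‖ := by
  set D := spanProj u - spanProj v
  have hsq := hu.norm_sum_smul_sub_sq_le hv hS_psd w
  calc ‖∑ i, w i • (u i - v i)‖ ≤ Real.sqrt (2 * ‖D (∑ i, w i • v i)‖ ^ 2) :=
        Real.le_sqrt_of_sq_le hsq
    _ = Real.sqrt 2 * ‖D (∑ i, w i • v i)‖ := by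
        rw [Real.sqrt_mul zero_le_two, Real.sqrt_sq (norm_nonneg _)]
    _ ≤ Real.sqrt 2 * (‖D‖ * ‖∑ i, w i • v i‖) := by gcongr; exact D.le_opNorm _
    _ = Real.sqrt 2 * ‖D‖ * ‖w‖ := by rw [hv.norm_sum_smul_euclidean, mul_assoc]

/-- If `u, v` are orthonormal families in a real Hilbert space whose Gram matrix
`S i j = ⟪u i, v j⟫` is symmetric positive semidefinite, then for any coefficient vector `w`,
`‖∑ i, w i • (u i - v i)‖ ≤ √2 ‖P_U - P_V‖ ‖w‖`. -/
theorem stmt0 {H : Type*} [NormedAddCommGroup H] [InnerProductSpace ℝ H] [CompleteSpace H]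
    {r : ℕ} (u v : Fin r → H) (hu : Orthonormal ℝ u) (hv : Orthonormal ℝ v)
    (hS_symm : (Matrix.of fun i j : Fin r => ⟪u i, v j⟫_ℝ).IsSymm)
    (hS_psd : (Matrix.of fun i j : Fin r => ⟪u i, v j⟫_ℝ).PosSemidef)
    (w : EuclideanSpace ℝ (Fin r)) :
    ‖∑ i, w i • (u i - v i)‖ ≤ Real.sqrt 2 * ‖spanProj u - spanProj v‖ * ‖w‖ :=
  stmt0_general u v hu hv hS_psd w
end

section
/- Let H be a real Hilbert space, r ∈ ℕ, and let u, v : Fin r → H be orthonormal families such that the r×r Gram matrix S with entries S i j = ⟨u i, v j⟩ is symmetric and positive semidefinite. Then for all x, y ∈ EuclideanSpace ℝ (Fin r), ‖x − y‖ ≤ √2 · ‖∑ i, (x i) • u i − ∑ i, (y i) • v i‖, where the norm on the left is the Euclidean norm and on the right the Hilbert norm of H. -/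
open scoped InnerProductSpace

/-
Write `A z = ∑ z i • u i` and `B z = ∑ z i • v i`; both are linear isometries from Euclidean
space, and `(z, w) ↦ ⟪A z, B w⟫ = z ⬝ᵥ S w` is a symmetric positive semidefinite form bounded by
`‖z‖ ‖w‖`. Polarization gives `4 ⟪A x, B y⟫ = ⟪A (x + y), B (x + y)⟫ - ⟪A (x - y), B (x - y)⟫
≤ ‖x + y‖²`, hence `2 ‖A x - B y‖² = 2 ‖x‖² + 2 ‖y‖² - 4 ⟪A x, B y⟫ ≥ ‖x - y‖²`
by the parallelogram law.
-/

section

variable {𝕜 ι E : Type*} [RCLike 𝕜] [Fintype ι] [NormedAddCommGroup E] [InnerProductSpace 𝕜 E]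
  {v : ι → E}

def Orthonormal.euclideanIsometry (hv : Orthonormal 𝕜 v) : EuclideanSpace 𝕜 ι →ₗᵢ[𝕜] E where
  toFun z := ∑ i, z i • v i
  map_add' z w := by simp only [PiLp.add_apply, add_smul, Finset.sum_add_distrib]
  map_smul' c z := by simp only [PiLp.smul_apply, smul_eq_mul, mul_smul, Finset.smul_sum,
    RingHom.id_apply]
  norm_map' z := by
    rw [@norm_eq_sqrt_re_inner 𝕜, @norm_eq_sqrt_re_inner 𝕜, LinearMap.coe_mk, AddHom.coe_mk,
      hv.inner_sum, PiLp.inner_apply]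
    simp only [RCLike.inner_apply, mul_comm]

@[simp]
theorem Orthonormal.euclideanIsometry_apply (hv : Orthonormal 𝕜 v) (z : EuclideanSpace 𝕜 ι) :
    hv.euclideanIsometry z = ∑ i, z i • v i :=
  rfl

end

theorem inner_sum_smul_sum_smul_eq_dotProduct_mulVec {ι H : Type*} [Fintype ι]
    [NormedAddCommGroup H] [InnerProductSpace ℝ H] (u v : ι → H) (z w : ι → ℝ) :
    ⟪∑ i, z i • u i, ∑ j, w j • v j⟫_ℝ = z ⬝ᵥ (Matrix.of fun i j => ⟪u i, v j⟫_ℝ).mulVec w := by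
  simp only [sum_inner, inner_sum, real_inner_smul_left, real_inner_smul_right, dotProduct,
    Matrix.mulVec, Matrix.of_apply, Finset.mul_sum]
  rw [Finset.sum_comm]
  exact Finset.sum_congr rfl fun i _ => Finset.sum_congr rfl fun j _ => by ring

theorem LinearIsometry.norm_sub_le_sqrt_two_mul_norm_sub {E H : Type*}
    [NormedAddCommGroup E] [InnerProductSpace ℝ E] [NormedAddCommGroup H] [InnerProductSpace ℝ H]
    (A B : E →ₗᵢ[ℝ] H) (hsymm : ∀ z w, ⟪A z, B w⟫_ℝ = ⟪A w, B z⟫_ℝ)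
    (hpos : ∀ z, 0 ≤ ⟪A z, B z⟫_ℝ) (x y : E) :
    ‖x - y‖ ≤ Real.sqrt 2 * ‖A x - B y‖ := by
  have hplus : ⟪A (x + y), B (x + y)⟫_ℝ ≤ ‖x + y‖ ^ 2 := by
    simpa only [A.norm_map, B.norm_map, sq] using real_inner_le_norm (A (x + y)) (B (x + y))
  have hminus := hpos (x - y)
  have hpolar : 4 * ⟪A x, B y⟫_ℝ ≤ ‖x + y‖ ^ 2 := by
    simp only [map_add, map_sub, inner_add_left, inner_add_right, inner_sub_left,
      inner_sub_right, hsymm y x] at hplus hminus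
    linarith
  have hAB : ‖A x - B y‖ ^ 2 = ‖x‖ ^ 2 + ‖y‖ ^ 2 - 2 * ⟪A x, B y⟫_ℝ := by
    rw [norm_sub_sq_real, A.norm_map, B.norm_map]; ring
  have hpar : ‖x - y‖ ^ 2 + ‖x + y‖ ^ 2 = 2 * ‖x‖ ^ 2 + 2 * ‖y‖ ^ 2 := by
    rw [norm_sub_sq_real, norm_add_sq_real]; ring
  rw [← Real.sqrt_sq (norm_nonneg (A x - B y)), ← Real.sqrt_mul zero_le_two,
    Real.le_sqrt (norm_nonneg _) (by positivity)]
  linarith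

theorem stmt1_general {H : Type*} [NormedAddCommGroup H] [InnerProductSpace ℝ H]
    {r : ℕ} (u v : Fin r → H) (hu : Orthonormal ℝ u) (hv : Orthonormal ℝ v)
    (hS_symm : (Matrix.of fun i j : Fin r => ⟪u i, v j⟫_ℝ).IsSymm)
    (hS_psd : (Matrix.of fun i j : Fin r => ⟪u i, v j⟫_ℝ).PosSemidef)
    (x y : EuclideanSpace ℝ (Fin r)) :
    ‖x - y‖ ≤ Real.sqrt 2 * ‖∑ i, x i • u i - ∑ i, y i • v i‖ := by
  have hgram (z w : EuclideanSpace ℝ (Fin r)) :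
      ⟪hu.euclideanIsometry z, hv.euclideanIsometry w⟫_ℝ =
        z.ofLp ⬝ᵥ (Matrix.of fun i j => ⟪u i, v j⟫_ℝ).mulVec w.ofLp := by
    simp only [Orthonormal.euclideanIsometry_apply]
    exact inner_sum_smul_sum_smul_eq_dotProduct_mulVec u v z w
  refine LinearIsometry.norm_sub_le_sqrt_two_mul_norm_sub
    hu.euclideanIsometry hv.euclideanIsometry (fun z w => ?_) (fun z => ?_) x y
  · rw [hgram, hgram, Matrix.dotProduct_mulVec, dotProduct_comm, ← Matrix.mulVec_transpose,
      hS_symm.eq]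
  · simpa only [hgram, star_trivial] using hS_psd.dotProduct_mulVec_nonneg z.ofLp

/-- If `u, v` are orthonormal families in a real Hilbert space whose Gram matrix
`S i j = ⟪u i, v j⟫` is symmetric positive semidefinite, then for all coefficient vectors
`x, y`, `‖x - y‖ ≤ √2 ‖∑ i, x i • u i - ∑ i, y i • v i‖`. -/
theorem stmt1 {H : Type*} [NormedAddCommGroup H] [InnerProductSpace ℝ H] [CompleteSpace H]
    {r : ℕ} (u v : Fin r → H) (hu : Orthonormal ℝ u) (hv : Orthonormal ℝ v)
    (hS_symm : (Matrix.of fun i j : Fin r => ⟪u i, v j⟫_ℝ).IsSymm)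
    (hS_psd : (Matrix.of fun i j : Fin r => ⟪u i, v j⟫_ℝ).PosSemidef)
    (x y : EuclideanSpace ℝ (Fin r)) :
    ‖x - y‖ ≤ Real.sqrt 2 * ‖∑ i, x i • u i - ∑ i, y i • v i‖ :=
  stmt1_general u v hu hv hS_symm hS_psd x y
end

section
/- Fix d ≥ 1 and ranks r : Fin d → ℕ. For each μ : Fin d, let u^μ, ũ^μ : Fin (r μ) → ℓ²(ℕ; ℝ) be orthonormal families such that the r μ × r μ matrix with entries ⟨u^μ_a, ũ^μ_b⟩ is symmetric and positive semidefinite. Then for all core tensors C, C̃ ∈ EuclideanSpace ℝ (Π μ : Fin d, Fin (r μ)), ‖C − C̃‖ ≤ √2 · ‖Ψ(C, u) − Ψ(C̃, ũ)‖, where the left-hand norm is the Frobenius norm on core tensors and the right-hand norm is the ℓ²-norm on H = ℓ²(ℕ^d; ℝ). -/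
/-!
With orthonormal factors, `C ↦ Ψ(C, u)` and `C ↦ Ψ(C, ũ)` are linear isometries, and their cross
form is `B(C, C') = ⟪Ψ(C, u), Ψ(C', ũ)⟫ = ⟪C, (M¹ ⊗ ⋯ ⊗ M^d) C'⟫` with
`M^μ = (⟪u^μ_a, ũ^μ_b⟫)_{a,b}`. It is symmetric because each `M^μ` is, and nonnegative because
`M^μ = (K^μ)ᵀ K^μ` makes `B(C, C) = ‖(K¹ ⊗ ⋯ ⊗ K^d) C‖²`. For any two linear isometries `Φ, Φ'`
with such a cross form, polarization gives `4 B(x, y) = B(x + y, x + y) - B(x - y, x - y)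
≤ ‖x + y‖²`, which together with `‖Φ x - Φ' y‖² = ‖x‖² - 2 B(x, y) + ‖y‖²` is exactly
`‖x - y‖² ≤ 2 ‖Φ x - Φ' y‖²`.
-/

open scoped InnerProductSpace ENNReal

namespace Tucker

variable (d : ℕ) (r : Fin d → ℕ)

/-- Core tensor space with the Frobenius (Euclidean) norm. -/
abbrev Ec := EuclideanSpace ℝ (∀ μ : Fin d, Fin (r μ))

/-- `ℓ²(ℕ; ℝ)`. -/
noncomputable abbrev l2N := lp (fun _ : ℕ => ℝ) 2

/-- The ambient space `H = ℓ²(ℕ^d; ℝ)`. -/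
noncomputable abbrev Hsp := lp (fun _ : Fin d → ℕ => ℝ) 2

/-- The `μ`-th matricization of a core tensor. -/
def matricize (μ : Fin d) (C : Ec d r) :
    Matrix (Fin (r μ)) (∀ ν : {ν : Fin d // ν ≠ μ}, Fin (r ν.1)) ℝ :=
  Matrix.of fun a b =>
    C fun ν => if h : ν = μ then Fin.cast (congrArg r h).symm a else b ⟨ν, h⟩

/-- Full multilinear rank. -/
def fullRank (C : Ec d r) : Prop := ∀ μ : Fin d, (matricize d r μ C).rank = r μ

/-- Multilinear multiplication `C ×₁ T¹ ⋯ ×_d T^d`. -/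
def mulMul (T : ∀ μ : Fin d, Matrix (Fin (r μ)) (Fin (r μ)) ℝ) (C : Ec d r) : Ec d r :=
  WithLp.toLp 2 (fun k => ∑ j : ∀ μ : Fin d, Fin (r μ), (∏ μ, T μ (k μ) (j μ)) * C j)

/-- Gram matrix of a finite family in `ℓ²(ℕ; ℝ)`. -/
noncomputable def gram {n : ℕ} (f : Fin n → l2N) : Matrix (Fin n) (Fin n) ℝ :=
  Matrix.of fun a b => ⟪f a, f b⟫_ℝ

open Classical in
/-- The tensor `Ψ(C, u)` with entries `i ↦ ∑_k C k ∏ μ, u^μ_{k μ} (i μ)`. -/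
noncomputable def Psi (C : Ec d r) (u : ∀ μ : Fin d, Fin (r μ) → l2N) : Hsp d :=
  if h : Memℓp (fun i : Fin d → ℕ =>
      ∑ k : ∀ μ : Fin d, Fin (r μ), C k * ∏ μ, (u μ (k μ) : ℕ → ℝ) (i μ)) 2
  then ⟨_, h⟩ else 0

/-- The low-rank manifold `M`. -/
def Mset (Mc : Set (Ec d r)) : Set (Hsp d) :=
  {X | ∃ C ∈ Mc, ∃ u : ∀ μ : Fin d, Fin (r μ) → l2N,
    (∀ μ, IsUnit (gram (u μ))) ∧ X = Psi d r C u}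

/-- The identity map into the weak topology. -/
def toWeak : Hsp d → WeakSpace ℝ (Hsp d) := fun x => x

/-- The weak closure of a subset of `H`. -/
def weakClosure (S : Set (Hsp d)) : Set (Hsp d) :=
  toWeak d ⁻¹' closure (toWeak d '' S)

end Tucker

theorem hasSum_prod_pi {β : Type*} {m : ℕ} (a : Fin m → β → ℝ)
    (ha : ∀ i, Summable fun b => ‖a i b‖) :
    HasSum (fun x : Fin m → β => ∏ i, a i (x i)) (∏ i, ∑' b, a i b) := by
  induction m with
  | zero => simp [hasSum_unique]
  | succ m ih =>
    set tail := fun x : Fin m → β => ∏ i, a i.succ (x i)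
    have hTail : HasSum tail _ := ih (fun i => a i.succ) fun i => ha i.succ
    have hTailNorm : Summable fun x => ‖tail x‖ := by
      simpa only [tail, norm_prod, Real.norm_eq_abs, abs_abs] using
        (ih (fun i b => ‖a i.succ b‖) fun i => by simpa using ha i.succ).summable
    have hHead := (ha 0).of_norm.hasSum
    have hProd := summable_mul_of_summable_norm (f := a 0) (g := tail) (ha 0) hTailNorm
    have hSplit : (fun x : Fin (m + 1) → β => ∏ i, a i (x i)) ∘ Fin.consEquiv (fun _ => β) =
        fun p => a 0 p.1 * tail p.2 := by
      ext p
      simp [tail, Fin.consEquiv, Fin.prod_univ_succ]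
    rw [Fin.prod_univ_succ, ← (Fin.consEquiv fun _ => β).hasSum_iff, hSplit]
    exact hHead.mul hTail hProd

theorem lp.summable_norm_mul_of_two {α : Type*} (f g : lp (fun _ : α => ℝ) 2) :
    Summable fun i => ‖f i * g i‖ := by
  simpa only [norm_mul] using
    lp.summable_mul (p := 2) (q := 2) (by simpa using Real.HolderConjugate.two_two) f g

section lpTprod

variable {α : Type*} {m : ℕ}

theorem lp.hasSum_prod_mul_prod (f g : Fin m → lp (fun _ : α => ℝ) 2) :
    HasSum (fun x : Fin m → α => (∏ i, f i (x i)) * ∏ i, g i (x i)) (∏ i, ⟪f i, g i⟫_ℝ) := by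
  have h := hasSum_prod_pi (fun i a => f i a * g i a) fun i =>
    lp.summable_norm_mul_of_two (f i) (g i)
  simp only [← Finset.prod_mul_distrib, lp.inner_eq_tsum]
  simpa [mul_comm] using h

noncomputable def lp.tprod (f : Fin m → lp (fun _ : α => ℝ) 2) : lp (fun _ : Fin m → α => ℝ) 2 :=
  ⟨fun x => ∏ i, f i (x i), memℓp_gen <| by
    simpa [sq, ← Finset.abs_prod, abs_mul_abs_self] using (lp.hasSum_prod_mul_prod f f).summable⟩

theorem lp.inner_tprod_tprod (f g : Fin m → lp (fun _ : α => ℝ) 2) :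
    ⟪lp.tprod f, lp.tprod g⟫_ℝ = ∏ i, ⟪f i, g i⟫_ℝ := by
  rw [lp.inner_eq_tsum, ← (lp.hasSum_prod_mul_prod f g).tsum_eq]
  simp [lp.tprod, mul_comm]

end lpTprod

theorem LinearIsometry.norm_sub_le_sqrt_two_mul {E F : Type*} [NormedAddCommGroup E]
    [InnerProductSpace ℝ E] [NormedAddCommGroup F] [InnerProductSpace ℝ F] (Φ Ψ : E →ₗᵢ[ℝ] F)
    (hsymm : ∀ x y, ⟪Φ x, Ψ y⟫_ℝ = ⟪Φ y, Ψ x⟫_ℝ) (hnonneg : ∀ x, 0 ≤ ⟪Φ x, Ψ x⟫_ℝ) (x y : E) :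
    ‖x - y‖ ≤ √2 * ‖Φ x - Ψ y‖ := by
  have hPlus : ⟪Φ (x + y), Ψ (x + y)⟫_ℝ ≤ ‖x + y‖ ^ 2 :=
    (real_inner_le_norm _ _).trans_eq (by rw [Φ.norm_map, Ψ.norm_map, sq])
  have hMinus := hnonneg (x - y)
  simp only [map_add, map_sub, inner_add_left, inner_add_right, inner_sub_left,
    inner_sub_right] at hPlus hMinus
  have hSq : ‖x - y‖ ^ 2 ≤ 2 * ‖Φ x - Ψ y‖ ^ 2 := by
    rw [norm_sub_sq_real, norm_sub_sq_real, Φ.norm_map, Ψ.norm_map]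
    linarith [norm_add_sq_real x y, hsymm x y]
  rw [← Real.sqrt_sq (norm_nonneg (Φ x - Ψ y)), ← Real.sqrt_mul zero_le_two]
  exact Real.le_sqrt_of_sq_le hSq

namespace Tucker

variable (d : ℕ) (r : Fin d → ℕ)

section

variable {d r}

open scoped Matrix

theorem mulMul_apply (T : ∀ μ : Fin d, Matrix (Fin (r μ)) (Fin (r μ)) ℝ) (C : Ec d r) (k) :
    mulMul d r T C k = ∑ j, (∏ μ, T μ (k μ) (j μ)) * C j := rfl

theorem mulMul_one (C : Ec d r) : mulMul d r (fun _ => 1) C = C := by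
  ext k
  simp [mulMul_apply, Matrix.one_apply, Finset.prod_boole, ← funext_iff]

theorem mulMul_mulMul (A B : ∀ μ : Fin d, Matrix (Fin (r μ)) (Fin (r μ)) ℝ) (C : Ec d r) :
    mulMul d r A (mulMul d r B C) = mulMul d r (fun μ => A μ * B μ) C := by
  ext k
  simp only [mulMul_apply, Matrix.mul_apply, Fintype.prod_sum, Finset.prod_mul_distrib,
    Finset.mul_sum, Finset.sum_mul]
  rw [Finset.sum_comm]
  exact Finset.sum_congr rfl fun j _ => Finset.sum_congr rfl fun c _ => by ring

theorem inner_mulMul_left (T : ∀ μ : Fin d, Matrix (Fin (r μ)) (Fin (r μ)) ℝ) (x y : Ec d r) :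
    ⟪mulMul d r T x, y⟫_ℝ = ⟪x, mulMul d r (fun μ => (T μ)ᵀ) y⟫_ℝ := by
  simp only [PiLp.inner_apply, mulMul_apply, Matrix.transpose_apply, RCLike.inner_apply,
    conj_trivial, Finset.mul_sum, Finset.sum_mul]
  rw [Finset.sum_comm]
  exact Finset.sum_congr rfl fun k _ => Finset.sum_congr rfl fun j _ => by ring

open scoped MatrixOrder in
theorem inner_mulMul_self_nonneg {T : ∀ μ : Fin d, Matrix (Fin (r μ)) (Fin (r μ)) ℝ}
    (hT : ∀ μ, (T μ).PosSemidef) (x : Ec d r) : 0 ≤ ⟪x, mulMul d r T x⟫_ℝ := by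
  choose B hB using fun μ => CStarAlgebra.nonneg_iff_eq_star_mul_self.mp (hT μ).nonneg
  have hT' : T = fun μ => (B μ)ᵀ * B μ := funext fun μ => by
    rw [hB, Matrix.star_eq_conjTranspose, Matrix.conjTranspose_eq_transpose_of_trivial]
  rw [hT', ← mulMul_mulMul, ← inner_mulMul_left]
  exact real_inner_self_nonneg

theorem inner_mulMul_comm {T : ∀ μ : Fin d, Matrix (Fin (r μ)) (Fin (r μ)) ℝ}
    (hT : ∀ μ, (T μ).IsSymm) (x y : Ec d r) :
    ⟪x, mulMul d r T y⟫_ℝ = ⟪y, mulMul d r T x⟫_ℝ := by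
  calc ⟪x, mulMul d r T y⟫_ℝ = ⟪mulMul d r T x, y⟫_ℝ := by
        rw [inner_mulMul_left, funext fun μ => (hT μ).eq]
    _ = ⟪y, mulMul d r T x⟫_ℝ := real_inner_comm _ _

theorem Psi_eq_sum (C : Ec d r) (u : ∀ μ : Fin d, Fin (r μ) → l2N) :
    Psi d r C u = ∑ k, C k • lp.tprod fun μ => u μ (k μ) := by
  have hCoe : (fun i => ∑ k, C k * ∏ μ, u μ (k μ) (i μ)) =
      ⇑(∑ k, C k • lp.tprod fun μ => u μ (k μ)) := by
    ext i
    simp only [lp.coeFn_sum, lp.coeFn_smul, Finset.sum_apply, Pi.smul_apply, smul_eq_mul]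
    rfl
  rw [Psi, dif_pos (hCoe ▸ lp.memℓp _)]
  exact lp.ext hCoe

theorem inner_Psi_Psi (u v : ∀ μ : Fin d, Fin (r μ) → l2N) (x y : Ec d r) :
    ⟪Psi d r x u, Psi d r y v⟫_ℝ =
      ⟪x, mulMul d r (fun μ => Matrix.of fun a b => ⟪u μ a, v μ b⟫_ℝ) y⟫_ℝ := by
  simp only [Psi_eq_sum, sum_inner, inner_sum, real_inner_smul_left, real_inner_smul_right,
    lp.inner_tprod_tprod, PiLp.inner_apply, mulMul_apply, Matrix.of_apply, RCLike.inner_apply,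
    conj_trivial, Finset.sum_mul]
  rw [Finset.sum_comm]
  exact Finset.sum_congr rfl fun k _ => Finset.sum_congr rfl fun j _ => by ring

theorem inner_Psi_Psi_of_orthonormal {u : ∀ μ : Fin d, Fin (r μ) → l2N}
    (hu : ∀ μ, Orthonormal ℝ (u μ)) (x y : Ec d r) :
    ⟪Psi d r x u, Psi d r y u⟫_ℝ = ⟪x, y⟫_ℝ := by
  have hGram : (fun μ => Matrix.of fun a b => ⟪u μ a, u μ b⟫_ℝ) = fun _ => 1 :=
    funext fun μ => Matrix.gram_eq_one_iff_orthonormal.mpr (hu μ)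
  rw [inner_Psi_Psi, hGram, mulMul_one]

noncomputable def psiIsometry (u : ∀ μ : Fin d, Fin (r μ) → l2N) (hu : ∀ μ, Orthonormal ℝ (u μ)) :
    Ec d r →ₗᵢ[ℝ] Hsp d :=
  LinearMap.isometryOfInner
    { toFun := fun C => Psi d r C u
      map_add' := fun x y => by
        simp only [Psi_eq_sum, PiLp.add_apply, add_smul, Finset.sum_add_distrib]
      map_smul' := fun c x => by
        simp only [Psi_eq_sum, PiLp.smul_apply, smul_eq_mul, mul_smul, Finset.smul_sum,
          RingHom.id_apply] }
    (inner_Psi_Psi_of_orthonormal hu)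

@[simp]
theorem psiIsometry_apply (u : ∀ μ : Fin d, Fin (r μ) → l2N) (hu : ∀ μ, Orthonormal ℝ (u μ))
    (C : Ec d r) : psiIsometry u hu C = Psi d r C u := rfl

end

theorem stmt10
    (u v : ∀ μ : Fin d, Fin (r μ) → l2N)
    (hu : ∀ μ, Orthonormal ℝ (u μ)) (hv : ∀ μ, Orthonormal ℝ (v μ))
    (hsymm : ∀ μ, (Matrix.of fun a b : Fin (r μ) => ⟪u μ a, v μ b⟫_ℝ).IsSymm)
    (hpsd : ∀ μ, (Matrix.of fun a b : Fin (r μ) => ⟪u μ a, v μ b⟫_ℝ).PosSemidef)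
    (C Ct : Ec d r) :
    ‖C - Ct‖ ≤ Real.sqrt 2 * ‖Psi d r C u - Psi d r Ct v‖ := by
  have hCrossSymm : ∀ x y, ⟪psiIsometry u hu x, psiIsometry v hv y⟫_ℝ =
      ⟪psiIsometry u hu y, psiIsometry v hv x⟫_ℝ := fun x y => by
    simpa only [psiIsometry_apply, inner_Psi_Psi] using inner_mulMul_comm hsymm x y
  have hCrossNonneg : ∀ x, 0 ≤ ⟪psiIsometry u hu x, psiIsometry v hv x⟫_ℝ := fun x => by
    simpa only [psiIsometry_apply, inner_Psi_Psi] using inner_mulMul_self_nonneg hpsd x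
  simpa only [psiIsometry_apply] using
    (psiIsometry u hu).norm_sub_le_sqrt_two_mul (psiIsometry v hv) hCrossSymm hCrossNonneg C Ct

end Tucker
end
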